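/- arXiv:quant-ph/0608080 — 5 statements merged into one kernel-verified Lean document; each statement's English description precedes it below -/
import Mathlib

section
/- For the icosahedral graph, every partition of its vertex set into two nonempty parts has some vertex that is incident to at least two edges crossing the partition. Hence the icosahedral graph is not locally reconstructible. -/
set_option maxRecDepth 40000

/-- The edge list of the icosahedral graph on vertices `0, …, 11`: vertex `0` is adjacent
to the upper 5-cycle `1–2–3–4–5–1`, vertex `11` is adjacent to the lower 5-cycle
`6–7–8–9–10–6`, and each `i ∈ {1,…,5}` is adjacent to `5+i` and `5+(i mod 5)+1`
(forming an antiprism between the two 5-cycles). -/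
def icosEdges : List (Fin 12 × Fin 12) :=
  [(0,1),(0,2),(0,3),(0,4),(0,5),
   (1,2),(2,3),(3,4),(4,5),(5,1),
   (11,6),(11,7),(11,8),(11,9),(11,10),
   (6,7),(7,8),(8,9),(9,10),(10,6),
   (1,6),(1,7),(2,7),(2,8),(3,8),(3,9),(4,9),(4,10),(5,10),(5,6)]

/-- The icosahedral graph as a simple graph on `Fin 12`. -/
def icosGraph : SimpleGraph (Fin 12) :=
  SimpleGraph.fromRel (fun a b => (a, b) ∈ icosEdges)

/-- Neighbor lists for the icosahedron. -/
def icosNbrs : Fin 12 → List (Fin 12)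
  | 0 => [1,2,3,4,5]
  | 1 => [0,2,5,6,7]
  | 2 => [0,1,3,7,8]
  | 3 => [0,2,4,8,9]
  | 4 => [0,3,5,9,10]
  | 5 => [0,1,4,6,10]
  | 6 => [1,5,7,10,11]
  | 7 => [1,2,6,8,11]
  | 8 => [2,3,7,9,11]
  | 9 => [3,4,8,10,11]
  | 10 => [4,5,6,9,11]
  | 11 => [6,7,8,9,10]

lemma icosAdj_iff (w u : Fin 12) : icosGraph.Adj w u ↔ u ∈ icosNbrs w := by
  show (w ≠ u ∧ ((w,u) ∈ icosEdges ∨ (u,w) ∈ icosEdges)) ↔ _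
  revert w u; decide

/-- The key property, with the subset encoded as the bits of a natural number. -/
abbrev P (n : Nat) : Prop :=
  (∃ v : Fin 12, n.testBit v.val = true) → (∃ v : Fin 12, n.testBit v.val = false) →
    ∃ w : Fin 12,
      2 ≤ (Finset.univ.filter
        (fun u : Fin 12 => u ∈ icosNbrs w ∧ n.testBit w.val ≠ n.testBit u.val)).card

lemma chunk0 : ∀ m : Fin 512, P (512 * 0 + m.val) := by decide
lemma chunk1 : ∀ m : Fin 512, P (512 * 1 + m.val) := by decide
lemma chunk2 : ∀ m : Fin 512, P (512 * 2 + m.val) := by decide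
lemma chunk3 : ∀ m : Fin 512, P (512 * 3 + m.val) := by decide
lemma chunk4 : ∀ m : Fin 512, P (512 * 4 + m.val) := by decide
lemma chunk5 : ∀ m : Fin 512, P (512 * 5 + m.val) := by decide
lemma chunk6 : ∀ m : Fin 512, P (512 * 6 + m.val) := by decide
lemma chunk7 : ∀ m : Fin 512, P (512 * 7 + m.val) := by decide

lemma keyNat (n : Nat) (hn : n < 4096) : P n := by
  obtain ⟨k, m, hk, hm, rfl⟩ : ∃ k m, k < 8 ∧ m < 512 ∧ n = 512 * k + m :=
    ⟨n / 512, n % 512, by omega, by omega, by omega⟩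
  interval_cases k
  · exact chunk0 ⟨m, hm⟩
  · exact chunk1 ⟨m, hm⟩
  · exact chunk2 ⟨m, hm⟩
  · exact chunk3 ⟨m, hm⟩
  · exact chunk4 ⟨m, hm⟩
  · exact chunk5 ⟨m, hm⟩
  · exact chunk6 ⟨m, hm⟩
  · exact chunk7 ⟨m, hm⟩

/-- Encode a boolean function on `Fin 12` as a natural number. -/
def enc (f : Fin 12 → Bool) : Nat :=
  Nat.bit (f 0) (Nat.bit (f 1) (Nat.bit (f 2) (Nat.bit (f 3) (Nat.bit (f 4)
    (Nat.bit (f 5) (Nat.bit (f 6) (Nat.bit (f 7) (Nat.bit (f 8) (Nat.bit (f 9)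
    (Nat.bit (f 10) (Nat.bit (f 11) 0)))))))))))

lemma enc_testBit (f : Fin 12 → Bool) (v : Fin 12) : (enc f).testBit v.val = f v := by
  fin_cases v <;>
    simp [enc, Nat.testBit_bit_zero, Nat.testBit_bit_succ]

lemma enc_lt (f : Fin 12 → Bool) : enc f < 4096 := by
  have hb : ∀ (b : Bool) (n m : Nat), n < m → Nat.bit b n < 2 * m := by
    intro b n m h; cases b <;> simp [Nat.bit] <;> omega
  have h0 : (0 : Nat) < 1 := one_pos
  unfold enc
  have := hb (f 0) _ _ (hb (f 1) _ _ (hb (f 2) _ _ (hb (f 3) _ _ (hb (f 4) _ _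
    (hb (f 5) _ _ (hb (f 6) _ _ (hb (f 7) _ _ (hb (f 8) _ _ (hb (f 9) _ _
    (hb (f 10) _ _ (hb (f 11) _ _ h0)))))))))))
  omega

lemma key (f : Fin 12 → Bool) (h1 : ∃ v, f v = true) (h2 : ∃ v, f v = false) :
    ∃ w : Fin 12,
      2 ≤ (Finset.univ.filter (fun u : Fin 12 => u ∈ icosNbrs w ∧ f w ≠ f u)).card := by
  have hP := keyNat (enc f) (enc_lt f)
  simp only [P, enc_testBit] at hP
  exact hP h1 h2

/-- Every partition of the vertex set of the icosahedral graph into two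
nonempty parts has some vertex incident to at least two crossing edges; hence the
icosahedral graph is not locally reconstructible. -/
theorem icosahedron_not_locally_reconstructible :
    (∀ S : Set (Fin 12), S.Nonempty → Sᶜ.Nonempty →
      ∃ w : Fin 12,
        2 ≤ Nat.card {u : Fin 12 | icosGraph.Adj w u ∧ ((w ∈ S) ↔ u ∉ S)}) ∧
    ¬ ∃ S : Set (Fin 12), S.Nonempty ∧ Sᶜ.Nonempty ∧
        ∀ w : Fin 12,
          Nat.card {u : Fin 12 | icosGraph.Adj w u ∧ ((w ∈ S) ↔ u ∉ S)} ≤ 1 := by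
  classical
  have main : ∀ S : Set (Fin 12), S.Nonempty → Sᶜ.Nonempty →
      ∃ w : Fin 12,
        2 ≤ Nat.card {u : Fin 12 | icosGraph.Adj w u ∧ ((w ∈ S) ↔ u ∉ S)} := by
    intro S ⟨a, ha⟩ ⟨b, hb⟩
    set f : Fin 12 → Bool := fun v => decide (v ∈ S) with hf
    obtain ⟨w, hw⟩ := key f ⟨a, by simp [hf, ha]⟩ ⟨b, by simp [hf]; exact hb⟩
    refine ⟨w, ?_⟩
    have hset : {u : Fin 12 | icosGraph.Adj w u ∧ ((w ∈ S) ↔ u ∉ S)} =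
        ↑(Finset.univ.filter (fun u : Fin 12 => u ∈ icosNbrs w ∧ f w ≠ f u)) := by
      ext u
      simp only [Set.mem_setOf_eq, Finset.coe_filter, Finset.mem_univ, true_and,
        icosAdj_iff, hf, ne_eq, decide_eq_decide]
      tauto
    rw [hset, Nat.card_coe_set_eq, Set.ncard_coe_finset]
    exact hw
  refine ⟨main, ?_⟩
  rintro ⟨S, h1, h2, hall⟩
  obtain ⟨w, hw⟩ := main S h1 h2
  exact absurd (le_trans hw (hall w)) (by norm_num)
end

section
/- Fix an integer D ≥ 1 and define h : ℝ → ℝ by h(p) = 2(1−p)^{D+1} − (1−p)^D − p^D. Then h is strictly decreasing on [0, 1/2], h(0) = 1 > 0 and h(1/2) = −2^{−D} < 0, and consequently there exists a unique p_D ∈ (0, 1/2) with 2(1−p_D)^{D+1} = (1−p_D)^D + p_D^D. For D = 1, p_1 = 1 − 1/√2. -/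
/-- `h(p) = 2(1−p)^{D+1} − (1−p)^D − p^D`, whose unique root in `(0,1/2)` is the
threshold error probability for a graph of minimum degree `D` under local Z-noise. -/
def hpol (D : ℕ) (p : ℝ) : ℝ := 2 * (1 - p)^(D + 1) - (1 - p)^D - p^D

lemma hpol_eq (D : ℕ) (p : ℝ) : hpol D p = (1 - p)^D * (1 - 2*p) - p^D := by
  simp only [hpol, pow_succ]; ring

lemma hpol_strictAnti (D : ℕ) (hD : 1 ≤ D) :
    StrictAntiOn (hpol D) (Set.Icc 0 (1/2 : ℝ)) := by
  intro x hx y hy hxy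
  obtain ⟨hx0, hx2⟩ := hx
  obtain ⟨hy0, hy2⟩ := hy
  have hDne : D ≠ 0 := by omega
  rw [hpol_eq, hpol_eq]
  have hxd : x ^ D ≤ y ^ D := pow_le_pow_left₀ hx0 hxy.le D
  have hx1 : (0:ℝ) < 1 - x := by linarith
  have hA : (1 - y)^D * (1 - 2*y) < (1 - x)^D * (1 - 2*x) := by
    rcases lt_or_eq_of_le hy2 with hlt | heq'
    · have h1 : (1 - y)^D < (1 - x)^D :=
        pow_lt_pow_left₀ (by linarith) (by linarith) hDne
      have h2 : (0:ℝ) < 1 - 2*y := by linarith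
      calc (1 - y)^D * (1 - 2*y) < (1 - x)^D * (1 - 2*y) := by
            exact mul_lt_mul_of_pos_right h1 h2
        _ ≤ (1 - x)^D * (1 - 2*x) := by
            apply mul_le_mul_of_nonneg_left (by linarith) (by positivity)
    · subst heq'
      norm_num
      have : (0:ℝ) < 1 - 2*x := by linarith
      positivity
  linarith

lemma hpol_zero (D : ℕ) (hD : 1 ≤ D) : hpol D 0 = 1 := by
  simp [hpol, zero_pow (by omega : D ≠ 0)]
  norm_num

lemma hpol_half (D : ℕ) : hpol D (1/2) = -(1/2)^D := by
  simp only [hpol, pow_succ]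
  norm_num
  ring

/-- For `D ≥ 1`, `h` is strictly decreasing on `[0,1/2]`, `h(0) = 1 > 0`,
`h(1/2) = −2^{−D} < 0`, there is a unique `p_D ∈ (0,1/2)` with
`2(1−p_D)^{D+1} = (1−p_D)^D + p_D^D`, and for `D = 1` this root is `1 − 1/√2`. -/
theorem threshold_root_exists_unique (D : ℕ) (hD : 1 ≤ D) :
    StrictAntiOn (hpol D) (Set.Icc 0 (1/2)) ∧
    hpol D 0 = 1 ∧
    hpol D (1/2) = -(1/2)^D ∧
    (∃! p : ℝ, p ∈ Set.Ioo (0 : ℝ) (1/2) ∧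
        2 * (1 - p)^(D + 1) = (1 - p)^D + p^D) ∧
    (D = 1 →
      (1 - 1/Real.sqrt 2) ∈ Set.Ioo (0 : ℝ) (1/2) ∧
      2 * (1 - (1 - 1/Real.sqrt 2))^(D + 1) =
        (1 - (1 - 1/Real.sqrt 2))^D + (1 - 1/Real.sqrt 2)^D) := by
  have hSA := hpol_strictAnti D hD
  refine ⟨hSA, hpol_zero D hD, hpol_half D, ?_, ?_⟩
  · -- existence and uniqueness via IVT
    have hcont : ContinuousOn (hpol D) (Set.Icc (0:ℝ) (1/2)) := by
      apply Continuous.continuousOn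
      unfold hpol
      continuity
    have hmem : (0:ℝ) ∈ Set.Ioo (hpol D (1/2)) (hpol D 0) := by
      rw [hpol_zero D hD, hpol_half D]
      constructor
      · have : (0:ℝ) < (1/2)^D := by positivity
        linarith
      · norm_num
    have := intermediate_value_Ioo' (by norm_num : (0:ℝ) ≤ 1/2) hcont hmem
    obtain ⟨p, hp, hp0⟩ := this
    refine ⟨p, ⟨hp, ?_⟩, ?_⟩
    · have : hpol D p = 0 := hp0
      unfold hpol at this; linarith
    · rintro q ⟨hq, hqe⟩
      have hq0 : hpol D q = 0 := by unfold hpol; linarith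
      have hIcc : Set.Ioo (0:ℝ) (1/2) ⊆ Set.Icc (0:ℝ) (1/2) := Set.Ioo_subset_Icc_self
      exact hSA.injOn (hIcc hq) (hIcc hp) (by rw [hq0, hp0])
  · -- D = 1 case
    intro hD1
    subst hD1
    have h2 : (0:ℝ) < Real.sqrt 2 := Real.sqrt_pos.mpr (by norm_num)
    have h1lt : (1:ℝ) < Real.sqrt 2 := by
      have := Real.sq_sqrt (by norm_num : (2:ℝ) ≥ 0)
      nlinarith
    have hlt2 : Real.sqrt 2 < 2 := by
      have := Real.sq_sqrt (by norm_num : (2:ℝ) ≥ 0)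
      nlinarith
    have hsq : Real.sqrt 2 * Real.sqrt 2 = 2 :=
      Real.mul_self_sqrt (by norm_num)
    constructor
    · constructor
      · have : 1 / Real.sqrt 2 < 1 := by
          rw [div_lt_one h2]; exact h1lt
        linarith
      · have : 1/2 < 1 / Real.sqrt 2 := by
          rw [lt_div_iff₀ h2]; linarith
        linarith
    · have : (1 - (1 - 1/Real.sqrt 2)) = 1/Real.sqrt 2 := by ring
      rw [this]
      have hs : (1 / Real.sqrt 2 : ℝ) ^ (1 + 1) = 1/2 := by
        rw [div_pow, one_pow, pow_two, hsq]
      rw [hs]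
      ring
end

section
/- For each integer D ≥ 1 let p_D ∈ (0, 1/2) be the unique solution of 2(1−p)^{D+1} = (1−p)^D + p^D in (0, 1/2). Then p_D → 1/2 as D → ∞. In particular, for every fixed p ∈ (0, 1/2) one has 2(1−p)^{D+1} > (1−p)^D + p^D for all sufficiently large D, while for every p ∈ (1/2, 1) and every D ≥ 1 one has 2(1−p)^{D+1} ≤ (1−p)^D + p^D. -/
/-- If `P D ∈ (0,1/2)` solves `2(1−p)^{D+1} = (1−p)^D + p^D` for every
`D ≥ 1`, then `P D → 1/2` as `D → ∞`; in particular, for every fixed `p ∈ (0,1/2)` one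
has `2(1−p)^{D+1} > (1−p)^D + p^D` for all sufficiently large `D`, while for every
`p ∈ (1/2,1)` and every `D ≥ 1` one has `2(1−p)^{D+1} ≤ (1−p)^D + p^D`. -/
theorem threshold_tends_to_half (P : ℕ → ℝ)
    (hP : ∀ D : ℕ, 1 ≤ D →
      P D ∈ Set.Ioo (0 : ℝ) (1/2) ∧
      2 * (1 - P D)^(D + 1) = (1 - P D)^D + (P D)^D) :
    Filter.Tendsto P Filter.atTop (nhds (1/2)) ∧
    (∀ p : ℝ, p ∈ Set.Ioo (0 : ℝ) (1/2) →
      ∀ᶠ D : ℕ in Filter.atTop, 2 * (1 - p)^(D + 1) > (1 - p)^D + p^D) ∧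
    (∀ p : ℝ, p ∈ Set.Ioo (1/2 : ℝ) 1 →
      ∀ D : ℕ, 1 ≤ D → 2 * (1 - p)^(D + 1) ≤ (1 - p)^D + p^D) := by
  have key : ∀ D : ℕ, 1 ≤ D → (1 - 2 * P D) * (1 - P D)^D = (P D)^D := by
    intro D hD
    have h := (hP D hD).2
    rw [pow_succ] at h
    nlinarith [h]
  refine ⟨?_, ?_, ?_⟩
  · rw [tendsto_order]
    constructor
    · intro a ha
      set a' : ℝ := max a 0 with ha'
      have ha'0 : 0 ≤ a' := le_max_right _ _
      have ha'h : a' < 1/2 := max_lt ha (by norm_num)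
      have h1a' : 0 < 1 - a' := by linarith
      set c : ℝ := a' / (1 - a') with hc
      have hc0 : 0 ≤ c := div_nonneg ha'0 h1a'.le
      have hc1 : c < 1 := by
        rw [div_lt_one h1a']; linarith
      have htend : Filter.Tendsto (fun D : ℕ => c ^ D) Filter.atTop (nhds 0) :=
        tendsto_pow_atTop_nhds_zero_of_lt_one hc0 hc1
      have hev : ∀ᶠ D : ℕ in Filter.atTop, c ^ D < 1 - 2 * a' :=
        htend.eventually_lt_const (by linarith)
      filter_upwards [hev, Filter.eventually_ge_atTop 1] with D hcD hD
      by_contra hcon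
      push_neg at hcon
      have hq := (hP D hD).1
      have hqa : P D ≤ a' := le_trans hcon (le_max_left _ _)
      have hq0 : 0 < P D := hq.1
      have hk := key D hD
      have h1 : (P D)^D ≤ a'^D := pow_le_pow_left₀ hq0.le hqa D
      have h2 : (1 - a')^D ≤ (1 - P D)^D := pow_le_pow_left₀ h1a'.le (by linarith) D
      have h3 : (1 - 2 * a') * (1 - a')^D ≤ (1 - 2 * P D) * (1 - P D)^D := by
        apply mul_le_mul (by linarith) h2 (pow_nonneg h1a'.le D) (by linarith)
      have h4 : (1 - 2 * a') * (1 - a')^D ≤ a'^D := by linarith [hk ▸ h3]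
      have h5 : c ^ D = a'^D / (1 - a')^D := div_pow a' (1 - a') D
      have h6 : 0 < (1 - a')^D := pow_pos h1a' D
      rw [h5, div_lt_iff₀ h6] at hcD
      linarith
    · intro b hb
      filter_upwards [Filter.eventually_ge_atTop 1] with D hD
      exact lt_trans (hP D hD).1.2 hb
  · rintro p ⟨hp0, hp1⟩
    have h1p : 0 < 1 - p := by linarith
    set c : ℝ := p / (1 - p) with hc
    have hc0 : 0 ≤ c := div_nonneg hp0.le h1p.le
    have hc1 : c < 1 := by rw [div_lt_one h1p]; linarith
    have htend : Filter.Tendsto (fun D : ℕ => c ^ D) Filter.atTop (nhds 0) :=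
      tendsto_pow_atTop_nhds_zero_of_lt_one hc0 hc1
    have hev : ∀ᶠ D : ℕ in Filter.atTop, c ^ D < 1 - 2 * p :=
      htend.eventually_lt_const (by linarith)
    filter_upwards [hev] with D hcD
    have hpd : p ^ D = c ^ D * (1 - p)^D := by
      rw [hc, div_pow, div_mul_cancel₀]
      exact pow_ne_zero D h1p.ne'
    have h6 : 0 < (1 - p)^D := pow_pos h1p D
    have : p ^ D < (1 - 2 * p) * (1 - p)^D := by
      rw [hpd]; exact mul_lt_mul_of_pos_right hcD h6
    rw [pow_succ]
    nlinarith
  · rintro p ⟨hp1, hp2⟩ D hD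
    have h1 : (0:ℝ) ≤ (1 - p)^D := pow_nonneg (by linarith) D
    have h2 : (0:ℝ) ≤ p^D := pow_nonneg (by linarith) D
    have h3 : 0 ≤ (1 - p)^D * (2 * p - 1) := mul_nonneg h1 (by linarith)
    rw [pow_succ]
    nlinarith
end

section
/- Let M ≥ 1 be an integer (M = 2^{N−1}) and x ≥ 0 a real number, and set p = (M+x)/(2M+x). Define the following vectors in ℝ^{2M}, indexed by s ∈ {0,…,2M−1}: v(2i) = (1 + x·[i=0])/(M+x) and v(2i+1) = 0 for 0 ≤ i < M; and for each j ∈ {0,…,M−1}, u_j(2i+1) = (1 + x·[i=j])/(M+x) and u_j(2i) = 0 for 0 ≤ i < M. Then p·v + ((1−p)/M)·∑_{j=0}^{M−1} u_j = w, where w(0) = (1+x)/(2M+x) and w(s) = 1/(2M+x) for all s ≠ 0. -/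
/-! The `u_j` split the odd coordinates evenly, so `∑ j, u_j` is the indicator of the odd
coordinates, while `v` lives on the even ones. The weight `p` is chosen so that
`p / (M + x) = (1 - p) / M = 1 / (2M + x)`, the uniform part of `w`. -/

theorem one_sub_div_two_mul_add_div {K : Type*} [Field K] {m x : K} (hm : m ≠ 0)
    (h : 2 * m + x ≠ 0) : (1 - (m + x) / (2 * m + x)) / m = 1 / (2 * m + x) := by
  rw [one_sub_div h]
  field_simp
  ring

theorem sum_one_add_ite_div_card_add {K ι : Type*} [Field K] [Fintype ι] [DecidableEq ι]
    {x : K} (k : ι) (h : (Fintype.card ι : K) + x ≠ 0) :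
    ∑ j, (1 + if j = k then x else 0) / (Fintype.card ι + x) = 1 := by
  rw [← Finset.sum_div, Finset.sum_add_distrib, Finset.sum_ite_eq']
  simpa using div_self h

theorem depolarized_state_reconstruction_general (M : ℕ) (x : ℝ) (hx : 0 ≤ x)
    (p : ℝ) (hp : p = ((M : ℝ) + x) / (2 * M + x))
    (v : Fin (2 * M) → ℝ)
    (hv : ∀ s : Fin (2 * M),
      v s = if s.val % 2 = 0 then
              (1 + if s.val = 0 then x else 0) / ((M : ℝ) + x)
            else 0)
    (u : Fin M → Fin (2 * M) → ℝ)
    (hu : ∀ (j : Fin M) (s : Fin (2 * M)),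
      u j s = if s.val % 2 = 1 then
                (1 + if s.val = 2 * j.val + 1 then x else 0) / ((M : ℝ) + x)
              else 0)
    (w : Fin (2 * M) → ℝ)
    (hw : ∀ s : Fin (2 * M),
      w s = (1 + if s.val = 0 then x else 0) / (2 * (M : ℝ) + x)) :
    ∀ s : Fin (2 * M), p * v s + ((1 - p) / M) * ∑ j : Fin M, u j s = w s := by
  intro s
  have hM : (0 : ℝ) < M := by exact_mod_cast Nat.pos_of_mul_pos_left s.pos
  have hMx : (M : ℝ) + x ≠ 0 := by positivity
  obtain ⟨k, hs | hs⟩ := Nat.even_or_odd' s.val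
  · have hsum : ∑ j : Fin M, u j s = 0 :=
      Finset.sum_eq_zero fun j _ ↦ by simp [hu, hs]
    rw [hsum, hv, hw, hp, if_pos (by omega), div_mul_div_cancel₀' hMx]
    ring
  · have hk : k < M := by omega
    have hsum : ∑ j : Fin M, u j s = 1 := by
      have hsj : ∀ j : Fin M, k = j.val ↔ j = ⟨k, hk⟩ := fun j ↦ by
        rw [Fin.ext_iff, eq_comm]
      simpa [hu, hs, hsj] using sum_one_add_ite_div_card_add (K := ℝ) (⟨k, hk⟩ : Fin M)
        (by simpa using hMx)
    rw [hsum, hv, hw, hp, if_neg (by omega), if_neg (by omega),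
      one_sub_div_two_mul_add_div hM.ne' (by positivity)]
    ring

/-- With `M ≥ 1`, `x ≥ 0`, `p = (M+x)/(2M+x)`, and the vectors
`v`, `u_j`, `w` in `ℝ^{2M}` defined by
`v(2i) = (1 + x·[i=0])/(M+x)`, `v(2i+1) = 0`,
`u_j(2i+1) = (1 + x·[i=j])/(M+x)`, `u_j(2i) = 0`,
`w(0) = (1+x)/(2M+x)` and `w(s) = 1/(2M+x)` for `s ≠ 0`,
one has `p·v + ((1−p)/M)·∑_j u_j = w`. -/
theorem depolarized_state_reconstruction (M : ℕ) (hM : 1 ≤ M) (x : ℝ) (hx : 0 ≤ x)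
    (p : ℝ) (hp : p = ((M : ℝ) + x) / (2 * M + x))
    (v : Fin (2 * M) → ℝ)
    (hv : ∀ s : Fin (2 * M),
      v s = if s.val % 2 = 0 then
              (1 + if s.val = 0 then x else 0) / ((M : ℝ) + x)
            else 0)
    (u : Fin M → Fin (2 * M) → ℝ)
    (hu : ∀ (j : Fin M) (s : Fin (2 * M)),
      u j s = if s.val % 2 = 1 then
                (1 + if s.val = 2 * j.val + 1 then x else 0) / ((M : ℝ) + x)
              else 0)
    (w : Fin (2 * M) → ℝ)
    (hw : ∀ s : Fin (2 * M),
      w s = (1 + if s.val = 0 then x else 0) / (2 * (M : ℝ) + x)) :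
    ∀ s : Fin (2 * M), p * v s + ((1 - p) / M) * ∑ j : Fin M, u j s = w s :=
  depolarized_state_reconstruction_general M x hx p hp v hv u hu w hw
end

section
/- Let D ≥ 1 and n ≥ 0 be integers, x > 0 a real number, and ω = exp(−2πi/D). Define λ⁰ : Fin D × Fin D → ℝ by λ⁰(k,j) = (1 + x·[k=0][j=0])/(D²+x), and define Λ : Fin D × Fin D → ℂ by Λ(k,j) = ∑_{k'=0}^{D−1} ω^{k·k'} · (∑_{k''=0}^{D−1} ω^{k''·k'} · λ⁰(k'',j))^{2ⁿ}. Then Λ(0,0) / ∑_{k,j} Λ(k,j) = ((x+D)^{2ⁿ} + (D−1)·x^{2ⁿ}) / (D·((x+D)^{2ⁿ} + (D−1)·D^{2ⁿ})). -/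
/-!
With `c = D² + x`, `λ⁰(·, j)` is the constant `1/c` plus a spike `x[j=0]/c` at `k'' = 0`, so by
orthogonality of the characters `k ↦ ω^{k k'}` the inner sum equals `(D[k'=0] + x[j=0])/c`.
Summing `Λ(k, j)` over `k` is Fourier inversion at `0` and leaves `D ((D + x[j=0])/c)^{2ⁿ}`, while
`Λ(0, 0)` is the plain sum of the `2ⁿ`-th powers over `k'`. The common factor `c^{-2ⁿ}` cancels in
the ratio.
-/

open Finset

theorem Complex.isPrimitiveRoot_exp_neg (D : ℕ) (hD : D ≠ 0) :
    IsPrimitiveRoot (Complex.exp (-2 * Real.pi * Complex.I / D)) D := by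
  have hinv : Complex.exp (-2 * Real.pi * Complex.I / D) =
      (Complex.exp (2 * Real.pi * Complex.I / D))⁻¹ := by
    rw [← Complex.exp_neg]
    ring_nf
  exact hinv ▸ (Complex.isPrimitiveRoot_exp D hD).inv

namespace Fin

variable {D : ℕ}

theorem sum_ite_val_eq_zero {M : Type*} [AddCommMonoid M] (hD : 0 < D) (f : Fin D → M) :
    ∑ k : Fin D, (if k.val = 0 then f k else 0) = f ⟨0, hD⟩ :=
  (Fintype.sum_eq_single ⟨0, hD⟩ fun _ hk => if_neg fun h => hk (Fin.ext h)).trans (if_pos rfl)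

theorem sum_ite_val_eq_zero_const {R : Type*} [Ring R] (hD : 0 < D) (a b : R) :
    ∑ k : Fin D, (if k.val = 0 then a else b) = a + ((D : R) - 1) * b := by
  obtain ⟨m, rfl⟩ := Nat.exists_eq_add_one_of_ne_zero hD.ne'
  simp [Fin.sum_univ_succ]

end Fin

namespace IsPrimitiveRoot

variable {R : Type*} [CommRing R] [IsDomain R] {ζ : R} {D : ℕ}

theorem sum_fin_pow_val_mul (hζ : IsPrimitiveRoot ζ D) (a : Fin D) :
    ∑ b : Fin D, ζ ^ (b.val * a.val) = if a.val = 0 then (D : R) else 0 := by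
  split_ifs with ha
  · simp [ha]
  · have hne : ζ ^ a.val ≠ 1 := hζ.pow_ne_one_of_pos_of_lt ha a.isLt
    have hgeom : ∑ b : Fin D, ζ ^ (b.val * a.val) = ∑ i ∈ range D, (ζ ^ a.val) ^ i := by
      rw [Fin.sum_univ_eq_sum_range (fun i => ζ ^ (i * a.val))]
      simp only [mul_comm _ a.val, pow_mul]
    refine eq_zero_of_ne_zero_of_mul_left_eq_zero (sub_ne_zero_of_ne hne.symm) ?_
    rw [hgeom, mul_neg_geom_sum, ← pow_mul, mul_comm, pow_mul, hζ.pow_eq_one, one_pow, sub_self]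

theorem sum_pow_mul_ite (hζ : IsPrimitiveRoot ζ D) (k : Fin D) (a b : R) :
    ∑ k' : Fin D, ζ ^ (k.val * k'.val) * (if k'.val = 0 then a else b) =
      a - b + if k.val = 0 then (D : R) * b else 0 := by
  have hsplit : ∀ k' : Fin D, ζ ^ (k.val * k'.val) * (if k'.val = 0 then a else b) =
      (if k'.val = 0 then a - b else 0) + ζ ^ (k'.val * k.val) * b := by
    intro k'
    split_ifs with h <;> simp [h, mul_comm k.val]
  rw [sum_congr rfl fun k' _ => hsplit k', sum_add_distrib, Fin.sum_ite_val_eq_zero k.pos,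
    ← sum_mul, hζ.sum_fin_pow_val_mul]
  split_ifs <;> ring

theorem sum_sum_pow_mul (hζ : IsPrimitiveRoot ζ D) (hD : 0 < D) (g : Fin D → R) :
    ∑ k : Fin D, ∑ k' : Fin D, ζ ^ (k.val * k'.val) * g k' = D * g ⟨0, hD⟩ := by
  rw [sum_comm]
  simp only [← sum_mul, hζ.sum_fin_pow_val_mul, ite_mul, zero_mul]
  exact Fin.sum_ite_val_eq_zero hD _

end IsPrimitiveRoot

/-- With `ω = exp(−2πi/D)`,
`λ⁰(k,j) = (1 + x·[k=0][j=0])/(D²+x)` and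
`Λ(k,j) = ∑_{k'} ω^{kk'} (∑_{k''} ω^{k''k'} λ⁰(k'',j))^{2ⁿ}`, the normalized fidelity is
`Λ(0,0)/∑_{k,j} Λ(k,j) = ((x+D)^{2ⁿ} + (D−1)x^{2ⁿ}) / (D((x+D)^{2ⁿ} + (D−1)D^{2ⁿ}))`. -/
theorem alber_protocol_fidelity (D : ℕ) (hD : 0 < D) (n : ℕ) (x : ℝ) (hx : 0 < x)
    (ω : ℂ) (hω : ω = Complex.exp (-2 * Real.pi * Complex.I / D))
    (lam0 : Fin D × Fin D → ℝ)
    (hlam0 : ∀ k j : Fin D,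
      lam0 (k, j) = (1 + if k.val = 0 ∧ j.val = 0 then x else 0) / ((D : ℝ)^2 + x))
    (Λ : Fin D × Fin D → ℂ)
    (hΛ : ∀ k j : Fin D,
      Λ (k, j) = ∑ k' : Fin D, ω^(k.val * k'.val) *
        (∑ k'' : Fin D, ω^(k''.val * k'.val) * (lam0 (k'', j) : ℂ))^(2^n)) :
    Λ (⟨0, hD⟩, ⟨0, hD⟩) / ∑ s : Fin D × Fin D, Λ s =
      (((x : ℂ) + D)^(2^n) + ((D : ℂ) - 1) * (x : ℂ)^(2^n)) /
        ((D : ℂ) * (((x : ℂ) + D)^(2^n) + ((D : ℂ) - 1) * (D : ℂ)^(2^n))) := by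
  have hζ : IsPrimitiveRoot ω D := hω ▸ Complex.isPrimitiveRoot_exp_neg D hD.ne'
  set c : ℂ := (D : ℂ) ^ 2 + x
  have hc : c ≠ 0 := by
    simp only [c]
    norm_cast
    positivity
  have hlam0_ite : ∀ k j : Fin D, (lam0 (k, j) : ℂ) =
      if k.val = 0 then (1 + if j.val = 0 then (x : ℂ) else 0) / c else 1 / c := by
    intro k j
    by_cases hk : k.val = 0 <;> by_cases hj : j.val = 0 <;> simp [hlam0, hk, hj, c]
  have hinner : ∀ k' j : Fin D, ∑ k'' : Fin D, ω ^ (k''.val * k'.val) * (lam0 (k'', j) : ℂ) =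
      ((if k'.val = 0 then (D : ℂ) else 0) + if j.val = 0 then (x : ℂ) else 0) / c := by
    intro k' j
    simp only [hlam0_ite, mul_comm _ k'.val, hζ.sum_pow_mul_ite]
    split_ifs <;> field_simp <;> ring
  have hΛ00 : Λ (⟨0, hD⟩, ⟨0, hD⟩) =
      (((x : ℂ) + D) ^ (2 ^ n) + ((D : ℂ) - 1) * (x : ℂ) ^ (2 ^ n)) / c ^ (2 ^ n) := by
    simp only [hΛ, hinner, zero_mul, pow_zero, one_mul, ↓reduceIte, ite_add, ite_div, ite_pow]
    rw [Fin.sum_ite_val_eq_zero_const hD, div_pow, div_pow]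
    ring
  have htotal : ∑ s : Fin D × Fin D, Λ s =
      D * (((x : ℂ) + D) ^ (2 ^ n) + ((D : ℂ) - 1) * (D : ℂ) ^ (2 ^ n)) / c ^ (2 ^ n) := by
    rw [Fintype.sum_prod_type_right]
    simp only [hΛ, hζ.sum_sum_pow_mul hD, hinner, ↓reduceIte, add_ite, add_zero, ite_div, ite_pow]
    rw [← mul_sum, Fin.sum_ite_val_eq_zero_const hD, div_pow, div_pow]
    ring
  rw [hΛ00, htotal, div_div_div_cancel_right₀ (pow_ne_zero _ hc)]
end
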